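/- Let G be a connected simple graph with maximum degree at most 4 in which no two vertices of degree four are adjacent. Suppose there exists a vertex v of G satisfying either (a) deg(v) ≤ 2, or (b) deg(v) = 3 and v has at most two neighbours of degree four. Then all proper 5-edge-colourings of G are Kempe equivalent, i.e. κ_E(G, 5) = 1. -/

import Mathlib

open SimpleGraph

/-- A proper `k`-edge-colouring of `G`: distinct edges sharing a vertex receive
different colours. -/
def IsProperEdgeColoring {V : Type*} (G : SimpleGraph V) (k : ℕ)
    (φ : G.edgeSet → Fin k) : Prop :=
  ∀ e₁ e₂ : G.edgeSet, e₁ ≠ e₂ →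
    (∃ v : V, v ∈ (e₁ : Sym2 V) ∧ v ∈ (e₂ : Sym2 V)) → φ e₁ ≠ φ e₂

/-- The spanning subgraph of `G` consisting of the edges coloured `a` or `b` under `φ`. -/
def kempeGraph {V : Type*} (G : SimpleGraph V) {k : ℕ} (φ : G.edgeSet → Fin k)
    (a b : Fin k) : SimpleGraph V where
  Adj u v := ∃ h : G.Adj u v, φ ⟨s(u, v), h⟩ = a ∨ φ ⟨s(u, v), h⟩ = b
  symm := by
    constructor
    rintro u v ⟨h, hc⟩
    refine ⟨h.symm, ?_⟩
    have he : (⟨s(v, u), h.symm⟩ : G.edgeSet) = ⟨s(u, v), h⟩ :=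
      Subtype.ext (Sym2.eq_swap)
    rw [he]
    exact hc
  loopless := by
    constructor
    rintro v ⟨h, _⟩
    exact G.loopless.irrefl v h

/-- The edge `e` lies in the Kempe chain determined by the colours `a, b` and the
connected component of the vertex `w` in the `(a,b)`-subgraph. -/
def InKempeChain {V : Type*} (G : SimpleGraph V) {k : ℕ} (φ : G.edgeSet → Fin k)
    (a b : Fin k) (w : V) (e : G.edgeSet) : Prop :=
  (φ e = a ∨ φ e = b) ∧ ∃ u ∈ (e : Sym2 V), (kempeGraph G φ a b).Reachable w u

/-- `ψ` is obtained from `φ` by a single Kempe change: the colours `a` and `b` are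
swapped on one connected component of the subgraph induced by the edges coloured
`a` or `b`, and all other edges keep their colour. -/
def KempeChange {V : Type*} (G : SimpleGraph V) (k : ℕ)
    (φ ψ : G.edgeSet → Fin k) : Prop :=
  ∃ (a b : Fin k) (w : V), ∀ e : G.edgeSet,
    (InKempeChain G φ a b w e → ψ e = Equiv.swap a b (φ e)) ∧
    (¬ InKempeChain G φ a b w e → ψ e = φ e)

/-- Kempe equivalence: `ψ` is obtained from `φ` by a finite sequence of Kempe changes. -/
def KempeEquiv {V : Type*} (G : SimpleGraph V) (k : ℕ)
    (φ ψ : G.edgeSet → Fin k) : Prop :=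
  Relation.ReflTransGen (KempeChange G k) φ ψ

/-!
Induction on the graph, with connectedness weakened to "every vertex reaches a special vertex",
a vertex satisfying (a) or (b). A special vertex `z` that is not isolated has a neighbour `u` with
`deg u + deg z ≤ 6`, and in `G - uz` both `u` and `z` are special, so the invariant survives.

For an edge `uv` with `deg u + deg v ≤ k + 1`, every Kempe change of `G - uv` lifts to a Kempe
sequence of `G`. If `uv` has neither of the two swapped colours `a, b`, the chains of `G` and of
`G - uv` are the same. Otherwise say `uv` has colour `a`; counting the colours at `u` and `v`
gives either a third colour missing at both ends, to which `uv` is first recoloured, or an end of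
`uv` missing `b`, which is then a leaf of the `(a, b)`-subgraph of `G` and changes no chain of
`G - uv`. Lifting a Kempe sequence between the restrictions of `φ` and `ψ` ends at a colouring
that differs from `ψ` at most on `uv`, where `ψ uv` is missing at both ends: one more Kempe change
finishes.
-/

section

variable {V : Type*} {k : ℕ}

namespace SimpleGraph

variable {H H' : SimpleGraph V} {u v w x z : V}

theorem Reachable.mem_of_forall_adj_mem {S : Set V} (hS : ∀ x ∈ S, ∀ y, H.Adj x y → y ∈ S)
    (h : H.Reachable w z) (hw : w ∈ S) : z ∈ S := by
  obtain ⟨p⟩ := h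
  induction p with
  | nil => exact hw
  | cons hadj _ ih => exact ih (hS _ hw _ hadj)

theorem Reachable.eq_of_forall_not_adj (hx : ∀ y, ¬H.Adj x y) (h : H.Reachable x z) : z = x :=
  h.mem_of_forall_adj_mem (S := {x}) (fun _ hy y hadj => (hx y (hy ▸ hadj)).elim) rfl

theorem Reachable.of_le_sup_edge (hle : H ≤ H' ⊔ edge u v) (h : H.Reachable w z) :
    H'.Reachable w z ∨ (H'.Reachable w u ∧ H'.Reachable v z) ∨
      (H'.Reachable w v ∧ H'.Reachable u z) := by
  obtain ⟨p⟩ := h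
  induction p with
  | nil => exact Or.inl .rfl
  | cons hadj _ ih =>
    rcases hle hadj with hadj | hadj
    · have hr := hadj.reachable
      exact ih.imp hr.trans (Or.imp (And.imp_left hr.trans) (And.imp_left hr.trans))
    · obtain ⟨⟨rfl, rfl⟩ | ⟨rfl, rfl⟩, -⟩ := (edge_adj ..).1 hadj <;>
        rcases ih with h | ⟨-, h⟩ | ⟨-, h⟩
      exacts [Or.inr (Or.inl ⟨.rfl, h⟩), Or.inr (Or.inl ⟨.rfl, h⟩), Or.inl h,
        Or.inr (Or.inr ⟨.rfl, h⟩), Or.inl h, Or.inr (Or.inr ⟨.rfl, h⟩)]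

theorem Reachable.of_sup_edge_of_forall_not_adj (hu : ∀ y, ¬H.Adj u y) (hw : w ≠ u)
    (hz : z ≠ u) (h : (H ⊔ edge u v).Reachable w z) : H.Reachable w z := by
  rcases h.of_le_sup_edge le_rfl with h | ⟨h, -⟩ | ⟨-, h⟩
  · exact h
  · exact (hw (h.symm.eq_of_forall_not_adj hu)).elim
  · exact (hz (h.eq_of_forall_not_adj hu)).elim

theorem deleteEdges_sup_edge (huv : H.Adj u v) : H.deleteEdges {s(u, v)} ⊔ edge u v = H :=
  sdiff_sup_cancel ((edge_le_iff H).2 (Or.inr huv))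

theorem deleteEdges_lt (huv : H.Adj u v) : H.deleteEdges {s(u, v)} < H :=
  (deleteEdges_le _).lt_of_not_ge fun h => by simpa using h huv

end SimpleGraph

open SimpleGraph

section KempeSwap

variable {G : SimpleGraph V} {α β : G.edgeSet → Fin k} {a b : Fin k} {w x : V}

open Classical in
noncomputable def kempeSwap (G : SimpleGraph V) (α : G.edgeSet → Fin k) (a b : Fin k) (w : V) :
    G.edgeSet → Fin k :=
  fun e => if InKempeChain G α a b w e then Equiv.swap a b (α e) else α e

theorem kempeChange_kempeSwap : KempeChange G k α (kempeSwap G α a b w) :=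
  ⟨a, b, w, fun _ => ⟨fun h => if_pos h, fun h => if_neg h⟩⟩

theorem KempeChange.exists_eq_kempeSwap (h : KempeChange G k α β) :
    ∃ a b w, β = kempeSwap G α a b w := by
  obtain ⟨a, b, w, h⟩ := h
  refine ⟨a, b, w, funext fun e => ?_⟩
  by_cases he : InKempeChain G α a b w e
  · rw [(h e).1 he, kempeSwap, if_pos he]
  · rw [(h e).2 he, kempeSwap, if_neg he]

theorem kempeSwap_self : kempeSwap G α a a w = α :=
  funext fun _ => by simp [kempeSwap]

theorem kempeGraph_comm : kempeGraph G α a b = kempeGraph G α b a := by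
  ext x y
  exact exists_congr fun _ => or_comm

theorem kempeSwap_comm : kempeSwap G α a b w = kempeSwap G α b a w := by
  funext e
  have hchain : InKempeChain G α a b w e ↔ InKempeChain G α b a w e := by
    rw [InKempeChain, InKempeChain, kempeGraph_comm, or_comm]
  simp only [kempeSwap]
  split_ifs with h₁ h₂ h₂
  exacts [by rw [Equiv.swap_comm], (h₂ (hchain.1 h₁)).elim, (h₁ (hchain.2 h₂)).elim, rfl]

theorem exists_kempeGraph_adj_of_mem {f : G.edgeSet} (hx : x ∈ (f : Sym2 V))
    (hcol : α f = a ∨ α f = b) : ∃ y, (kempeGraph G α a b).Adj x y := by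
  obtain ⟨e, he⟩ := f
  induction e using Sym2.ind with | _ p q => ?_
  have hpq : (kempeGraph G α a b).Adj p q := ⟨he, hcol⟩
  rcases Sym2.mem_iff.1 hx with rfl | rfl
  exacts [⟨q, hpq⟩, ⟨p, hpq.symm⟩]

theorem InKempeChain.reachable_of_mem {f : G.edgeSet} (hf : InKempeChain G α a b w f)
    (hx : x ∈ (f : Sym2 V)) : (kempeGraph G α a b).Reachable w x := by
  obtain ⟨hcol, y, hy, hr⟩ := hf
  obtain ⟨e, he⟩ := f
  induction e using Sym2.ind with | _ p q => ?_
  have hpq : (kempeGraph G α a b).Adj p q := ⟨he, hcol⟩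
  rcases Sym2.mem_iff.1 hy with rfl | rfl <;> rcases Sym2.mem_iff.1 hx with rfl | rfl
  exacts [hr, hr.trans hpq.reachable, hr.trans hpq.symm.reachable, hr]

theorem IsProperEdgeColoring.kempeSwap (hα : IsProperEdgeColoring G k α) :
    IsProperEdgeColoring G k (kempeSwap G α a b w) := by
  intro e₁ e₂ hne ⟨z, hz₁, hz₂⟩
  have hdiff := hα e₁ e₂ hne ⟨z, hz₁, hz₂⟩
  -- an edge meeting the chain without belonging to it avoids both colours, so the swap fixes it
  have hout : ∀ {f g : G.edgeSet}, InKempeChain G α a b w f → ¬InKempeChain G α a b w g →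
      z ∈ (f : Sym2 V) → z ∈ (g : Sym2 V) → Equiv.swap a b (α g) = α g :=
    fun hf hg hzf hzg => Equiv.swap_apply_of_ne_of_ne
      (fun h => hg ⟨Or.inl h, z, hzg, hf.reachable_of_mem hzf⟩)
      (fun h => hg ⟨Or.inr h, z, hzg, hf.reachable_of_mem hzf⟩)
  simp only [_root_.kempeSwap]
  split_ifs with h₁ h₂ h₂
  · exact (Equiv.injective _).ne hdiff
  · rw [← hout h₁ h₂ hz₁ hz₂]; exact (Equiv.injective _).ne hdiff
  · rw [← hout h₂ h₁ hz₂ hz₁]; exact (Equiv.injective _).ne hdiff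
  · exact hdiff

theorem kempeSwap_eq_self_of_forall_not_adj (hw : ∀ y, ¬(kempeGraph G α a b).Adj w y) :
    kempeSwap G α a b w = α := by
  refine funext fun f => if_neg ?_
  rintro ⟨hcol, y, hy, hr⟩
  obtain ⟨z, hz⟩ := exists_kempeGraph_adj_of_mem hy hcol
  exact hw z ((hr.eq_of_forall_not_adj hw) ▸ hz)

end KempeSwap

section Recolouring

variable [DecidableEq V] {G : SimpleGraph V} {α : G.edgeSet → Fin k} {c : Fin k} {u v : V}

def IsMissingAt (α : G.edgeSet → Fin k) (x : V) (c : Fin k) : Prop :=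
  ∀ f : G.edgeSet, x ∈ (f : Sym2 V) → α f ≠ c

theorem kempeSwap_eq_update (hα : IsProperEdgeColoring G k α) (huv : G.Adj u v)
    (hu : IsMissingAt α u c) (hv : IsMissingAt α v c) :
    kempeSwap G α (α ⟨s(u, v), huv⟩) c u = Function.update α ⟨s(u, v), huv⟩ c := by
  set e : G.edgeSet := ⟨s(u, v), huv⟩
  have hlocal : ∀ {x : V} (f : G.edgeSet), x ∈ (e : Sym2 V) → x ∈ (f : Sym2 V) →
      (α f = α e ∨ α f = c) → f = e := by
    intro x f hxe hxf hcol
    by_contra hfe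
    rcases hcol with h | h
    · exact hα f e hfe ⟨x, hxf, hxe⟩ h
    · rcases Sym2.mem_iff.1 hxe with rfl | rfl
      exacts [hu f hxf h, hv f hxf h]
  -- the chain through `u` is the single edge `e`: no other edge at `u` or `v` has colour `α e`
  -- (properness) or `c` (missing)
  have hclosed : ∀ {y : V}, (kempeGraph G α (α e) c).Reachable u y → y ∈ (e : Sym2 V) :=
    fun hr => hr.mem_of_forall_adj_mem (S := {y | y ∈ (e : Sym2 V)})
      (fun x hx y (hxy : (kempeGraph G α (α e) c).Adj x y) =>
        hlocal ⟨_, hxy.1⟩ hx (Sym2.mem_mk_left _ _) hxy.2 ▸ Sym2.mem_mk_right _ _)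
      (Sym2.mem_mk_left _ _)
  have hchain : ∀ f, InKempeChain G α (α e) c u f ↔ f = e := fun f =>
    ⟨fun ⟨hcol, _, hy, hr⟩ => hlocal f (hclosed hr) hy hcol,
      fun hf => by subst hf; exact ⟨Or.inl rfl, u, Sym2.mem_mk_left _ _, .rfl⟩⟩
  funext f
  by_cases hf : f = e
  · subst hf
    rw [kempeSwap, if_pos ((hchain _).2 rfl), Function.update_self, Equiv.swap_apply_left]
  · rw [kempeSwap, if_neg (mt (hchain f).1 hf), Function.update_of_ne hf]

end Recolouring

section Restriction

variable {G H : SimpleGraph V} {α : G.edgeSet → Fin k} {a b : Fin k} {u v w x y : V}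

def restrictColoring (hHG : H ≤ G) (α : G.edgeSet → Fin k) : H.edgeSet → Fin k :=
  α ∘ Set.inclusion (edgeSet_mono hHG)

theorem IsProperEdgeColoring.restrictColoring (hα : IsProperEdgeColoring G k α) (hHG : H ≤ G) :
    IsProperEdgeColoring H k (restrictColoring hHG α) :=
  fun _ _ hne hshare => hα _ _ ((Set.inclusion_injective _).ne hne) hshare

theorem kempeGraph_restrictColoring_le (hHG : H ≤ G) :
    kempeGraph H (restrictColoring hHG α) a b ≤ kempeGraph G α a b :=
  fun _ _ ⟨h, hcol⟩ => ⟨hHG h, hcol⟩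

theorem kempeGraph_le_sup_edge (hHG : H ≤ G) (hGH : G ≤ H ⊔ edge u v) :
    kempeGraph G α a b ≤ kempeGraph H (restrictColoring hHG α) a b ⊔ edge u v :=
  fun _ _ ⟨hG, hcol⟩ => (hGH hG).imp (fun hH => ⟨hH, hcol⟩) id

theorem kempeGraph_le_restrictColoring (hHG : H ≤ G) (hGH : G ≤ H ⊔ edge u v)
    (huv : G.Adj u v)
    (ha : α ⟨s(u, v), huv⟩ ≠ a) (hb : α ⟨s(u, v), huv⟩ ≠ b) :
    kempeGraph G α a b ≤ kempeGraph H (restrictColoring hHG α) a b := by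
  intro p q hpq
  refine (kempeGraph_le_sup_edge hHG hGH hpq).resolve_right fun hedge => ?_
  obtain ⟨hG, hcol⟩ := hpq
  have he : (⟨s(p, q), hG⟩ : G.edgeSet) = ⟨s(u, v), huv⟩ :=
    Subtype.ext (Sym2.eq_iff.2 ((edge_adj ..).1 hedge).1)
  rw [he] at hcol
  exact hcol.elim ha hb

theorem restrictColoring_kempeSwap (hHG : H ≤ G)
    (hreach : ∀ y, (∃ z, (kempeGraph H (restrictColoring hHG α) a b).Adj y z) →
      (kempeGraph G α a b).Reachable w y →
        (kempeGraph H (restrictColoring hHG α) a b).Reachable w y) :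
    restrictColoring hHG (kempeSwap G α a b w) = kempeSwap H (restrictColoring hHG α) a b w := by
  funext f
  have hchain : InKempeChain G α a b w (Set.inclusion (edgeSet_mono hHG) f) ↔
      InKempeChain H (restrictColoring hHG α) a b w f :=
    ⟨fun ⟨hcol, y, hy, hr⟩ =>
        ⟨hcol, y, hy, hreach y (exists_kempeGraph_adj_of_mem hy hcol) hr⟩,
      fun ⟨hcol, y, hy, hr⟩ =>
        ⟨hcol, y, hy, hr.mono (kempeGraph_restrictColoring_le hHG)⟩⟩
  show kempeSwap G α a b w _ = _
  unfold kempeSwap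
  by_cases h : InKempeChain H (restrictColoring hHG α) a b w f
  · rw [if_pos h, if_pos (hchain.2 h)]; rfl
  · rw [if_neg h, if_neg (mt hchain.1 h)]; rfl

theorem restrictColoring_kempeSwap_of_ne (hHG : H ≤ G) (hGH : G ≤ H ⊔ edge u v)
    (huv : G.Adj u v) (ha : α ⟨s(u, v), huv⟩ ≠ a) (hb : α ⟨s(u, v), huv⟩ ≠ b) :
    restrictColoring hHG (kempeSwap G α a b w) = kempeSwap H (restrictColoring hHG α) a b w :=
  restrictColoring_kempeSwap hHG fun _ _ hr =>
    hr.mono (kempeGraph_le_restrictColoring hHG hGH huv ha hb)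

theorem restrictColoring_kempeSwap_of_forall_not_adj (hHG : H ≤ G) (hGH : G ≤ H ⊔ edge x y)
    (hx : ∀ z, ¬(kempeGraph H (restrictColoring hHG α) a b).Adj x z) (hw : w ≠ x) :
    restrictColoring hHG (kempeSwap G α a b w) = kempeSwap H (restrictColoring hHG α) a b w :=
  restrictColoring_kempeSwap hHG fun _ ⟨z, hz⟩ hr =>
    (hr.mono (kempeGraph_le_sup_edge hHG hGH)).of_sup_edge_of_forall_not_adj hx hw
      fun h => hx z (h ▸ hz)

theorem exists_restrictColoring_eq_kempeSwap_of_forall_not_adj (hHG : H ≤ G)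
    (hGH : G ≤ H ⊔ edge x y) (hα : IsProperEdgeColoring G k α)
    (hx : ∀ z, ¬(kempeGraph H (restrictColoring hHG α) a b).Adj x z) :
    ∃ β, IsProperEdgeColoring G k β ∧ KempeEquiv G k α β ∧
      restrictColoring hHG β = kempeSwap H (restrictColoring hHG α) a b w := by
  by_cases hw : w = x
  · subst hw
    exact ⟨α, hα, .refl, (kempeSwap_eq_self_of_forall_not_adj hx).symm⟩
  · exact ⟨kempeSwap G α a b w, hα.kempeSwap, .single kempeChange_kempeSwap,
      restrictColoring_kempeSwap_of_forall_not_adj hHG hGH hx hw⟩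

theorem not_adj_kempeGraph_deleteEdges (hα : IsProperEdgeColoring G k α) (huv : G.Adj u v)
    (hx : x ∈ s(u, v)) (ha : α ⟨s(u, v), huv⟩ = a) (hb : IsMissingAt α x b) (y : V) :
    ¬(kempeGraph (G.deleteEdges {s(u, v)}) (restrictColoring (deleteEdges_le _) α) a b).Adj
      x y := by
  rintro ⟨hH, hcol | hcol⟩
  · have hne : (⟨s(x, y), (deleteEdges_adj.1 hH).1⟩ : G.edgeSet) ≠ ⟨s(u, v), huv⟩ :=
      fun h => (deleteEdges_adj.1 hH).2 (congrArg Subtype.val h)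
    exact hα _ _ hne ⟨x, Sym2.mem_mk_left _ _, hx⟩ (hcol.trans ha.symm)
  · exact hb _ (Sym2.mem_mk_left _ _) hcol

end Restriction

section Counting

variable [Fintype V] [DecidableEq V] {G : SimpleGraph V} [DecidableRel G.Adj]
  {α : G.edgeSet → Fin k} {a b c : Fin k} {u v x : V}

def colorsAt (α : G.edgeSet → Fin k) (x : V) : Finset (Fin k) :=
  (Finset.univ.filter fun f : G.edgeSet => x ∈ (f : Sym2 V)).image α

theorem isMissingAt_iff_notMem_colorsAt : IsMissingAt α x c ↔ c ∉ colorsAt α x := by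
  simp only [IsMissingAt, colorsAt, Finset.mem_image, Finset.mem_filter, Finset.mem_univ, true_and,
    not_exists, not_and, ne_eq]

theorem card_colorsAt_le (α : G.edgeSet → Fin k) (x : V) :
    (colorsAt α x).card ≤ G.degree x := by
  rw [← card_incidenceFinset_eq_degree]
  refine Finset.card_image_le.trans
    (Finset.card_le_card_of_injOn Subtype.val (fun f hf => ?_) Subtype.val_injective.injOn)
  simp only [Finset.coe_filter, Finset.mem_univ, true_and, Set.mem_ofPred_eq] at hf
  simp [incidenceSet, hf]

theorem exists_isMissingAt_of_degree_add_le (huv : G.Adj u v)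
    (hdeg : G.degree u + G.degree v ≤ k + 1) (hab : a ≠ b) (ha : α ⟨s(u, v), huv⟩ = a) :
    (∃ c, c ≠ a ∧ c ≠ b ∧ IsMissingAt α u c ∧ IsMissingAt α v c) ∨
      IsMissingAt α u b ∨ IsMissingAt α v b := by
  simp only [isMissingAt_iff_notMem_colorsAt]
  by_contra! h
  obtain ⟨hc, hbu, hbv⟩ := h
  have hau : a ∈ colorsAt α u := Finset.mem_image.2 ⟨_, by simp, ha⟩
  have hav : a ∈ colorsAt α v := Finset.mem_image.2 ⟨_, by simp, ha⟩
  have hunion : Finset.univ ⊆ colorsAt α u ∪ colorsAt α v := by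
    intro c _
    rw [Finset.mem_union]
    by_cases hca : c = a
    · exact Or.inl (hca ▸ hau)
    by_cases hcb : c = b
    · exact Or.inl (hcb ▸ hbu)
    by_cases hcu : c ∈ colorsAt α u
    exacts [Or.inl hcu, Or.inr (hc c hca hcb hcu)]
  have hpair : {a, b} ⊆ colorsAt α u ∩ colorsAt α v := by
    simp [Finset.insert_subset_iff, hau, hav, hbu, hbv]
  have h₁ := Finset.card_union_add_card_inter (colorsAt α u) (colorsAt α v)
  have h₂ := Finset.card_le_card hunion
  have h₃ := Finset.card_le_card hpair
  rw [Finset.card_univ, Fintype.card_fin] at h₂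
  rw [Finset.card_pair hab] at h₃
  have := card_colorsAt_le α u
  have := card_colorsAt_le α v
  omega

end Counting

section Lifting

variable [Fintype V] [DecidableEq V] {G : SimpleGraph V} [DecidableRel G.Adj]
  {α φ ψ : G.edgeSet → Fin k} {a b : Fin k} {u v w : V}

theorem exists_restrictColoring_deleteEdges_eq_kempeSwap_of_eq (huv : G.Adj u v)
    (hdeg : G.degree u + G.degree v ≤ k + 1) (hα : IsProperEdgeColoring G k α) (hab : a ≠ b)
    (ha : α ⟨s(u, v), huv⟩ = a) :
    ∃ β, IsProperEdgeColoring G k β ∧ KempeEquiv G k α β ∧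
      restrictColoring (deleteEdges_le _) β =
        kempeSwap (G.deleteEdges {s(u, v)}) (restrictColoring (deleteEdges_le _) α) a b w := by
  have hGH := (deleteEdges_sup_edge huv).ge
  rcases exists_isMissingAt_of_degree_add_le huv hdeg hab ha with
    ⟨c, hca, hcb, hu, hv⟩ | hb | hb
  · -- recolouring `uv` with `c` keeps the restriction and takes `uv` out of the `(a, b)`-graph
    set α₂ := kempeSwap G α (α ⟨s(u, v), huv⟩) c u
    have hα₂ : α₂ = Function.update α ⟨s(u, v), huv⟩ c :=
      kempeSwap_eq_update hα huv hu hv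
    have hres : restrictColoring (deleteEdges_le {s(u, v)}) α₂ =
        restrictColoring (deleteEdges_le _) α := by
      rw [hα₂]
      refine funext fun f => Function.update_of_ne (fun h => ?_) _ _
      exact (edgeSet_deleteEdges _ ▸ f.2 : f.1 ∈ G.edgeSet \ {s(u, v)}).2
        (congrArg Subtype.val h)
    have hα₂e : α₂ ⟨s(u, v), huv⟩ = c := by rw [hα₂, Function.update_self]
    refine ⟨kempeSwap G α₂ a b w, hα.kempeSwap.kempeSwap,
      .tail (.single kempeChange_kempeSwap) kempeChange_kempeSwap, ?_⟩
    rw [restrictColoring_kempeSwap_of_ne _ hGH huv (hα₂e ▸ hca) (hα₂e ▸ hcb), hres]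
  · exact exists_restrictColoring_eq_kempeSwap_of_forall_not_adj _ hGH hα
      (not_adj_kempeGraph_deleteEdges hα huv (Sym2.mem_mk_left _ _) ha hb)
  · exact exists_restrictColoring_eq_kempeSwap_of_forall_not_adj _ (edge_comm u v ▸ hGH) hα
      (not_adj_kempeGraph_deleteEdges hα huv (Sym2.mem_mk_right _ _) ha hb)

theorem exists_restrictColoring_deleteEdges_eq_kempeSwap (huv : G.Adj u v)
    (hdeg : G.degree u + G.degree v ≤ k + 1) (hα : IsProperEdgeColoring G k α)
    (a b : Fin k) (w : V) :
    ∃ β, IsProperEdgeColoring G k β ∧ KempeEquiv G k α β ∧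
      restrictColoring (deleteEdges_le _) β =
        kempeSwap (G.deleteEdges {s(u, v)}) (restrictColoring (deleteEdges_le _) α) a b w := by
  by_cases hab : a = b
  · subst hab
    exact ⟨α, hα, .refl, by rw [kempeSwap_self]⟩
  by_cases ha : α ⟨s(u, v), huv⟩ = a
  · exact exists_restrictColoring_deleteEdges_eq_kempeSwap_of_eq huv hdeg hα hab ha
  by_cases hb : α ⟨s(u, v), huv⟩ = b
  · rw [kempeSwap_comm]
    exact exists_restrictColoring_deleteEdges_eq_kempeSwap_of_eq huv hdeg hα (Ne.symm hab) hb
  exact ⟨kempeSwap G α a b w, hα.kempeSwap, .single kempeChange_kempeSwap,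
    restrictColoring_kempeSwap_of_ne _ (deleteEdges_sup_edge huv).ge huv ha hb⟩

theorem exists_restrictColoring_deleteEdges_eq_of_kempeEquiv (huv : G.Adj u v)
    (hdeg : G.degree u + G.degree v ≤ k + 1) (hα : IsProperEdgeColoring G k α)
    {β' : (G.deleteEdges {s(u, v)}).edgeSet → Fin k}
    (h : KempeEquiv (G.deleteEdges {s(u, v)}) k (restrictColoring (deleteEdges_le _) α) β') :
    ∃ β, IsProperEdgeColoring G k β ∧ KempeEquiv G k α β ∧
      restrictColoring (deleteEdges_le _) β = β' := by
  induction h with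
  | refl => exact ⟨α, hα, .refl, rfl⟩
  | tail _ hstep ih =>
    obtain ⟨χ, hχ, hαχ, rfl⟩ := ih
    obtain ⟨a, b, w, rfl⟩ := hstep.exists_eq_kempeSwap
    obtain ⟨β, hβ, hχβ, hres⟩ :=
      exists_restrictColoring_deleteEdges_eq_kempeSwap huv hdeg hχ a b w
    exact ⟨β, hβ, hαχ.trans hχβ, hres⟩

theorem KempeEquiv.of_restrictColoring_deleteEdges (huv : G.Adj u v)
    (hdeg : G.degree u + G.degree v ≤ k + 1) (hφ : IsProperEdgeColoring G k φ)
    (hψ : IsProperEdgeColoring G k ψ)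
    (h : KempeEquiv (G.deleteEdges {s(u, v)}) k (restrictColoring (deleteEdges_le _) φ)
      (restrictColoring (deleteEdges_le _) ψ)) :
    KempeEquiv G k φ ψ := by
  obtain ⟨χ, hχ, hφχ, hres⟩ :=
    exists_restrictColoring_deleteEdges_eq_of_kempeEquiv huv hdeg hφ h
  set e : G.edgeSet := ⟨s(u, v), huv⟩
  have hagree : ∀ f, f ≠ e → χ f = ψ f := fun f hf =>
    congrFun hres ⟨f, edgeSet_deleteEdges _ ▸ ⟨f.2, fun h => hf (Subtype.ext h)⟩⟩
  by_cases he : χ e = ψ e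
  · have : χ = ψ := funext fun f => if hf : f = e then hf ▸ he else hagree f hf
    exact this ▸ hφχ
  have hmiss : ∀ x ∈ (e : Sym2 V), IsMissingAt χ x (ψ e) := fun x hx f hxf => by
    by_cases hf : f = e
    · exact hf ▸ he
    · rw [hagree f hf]
      exact hψ f e hf ⟨x, hxf, hx⟩
  have hψχ : ψ = kempeSwap G χ (χ e) (ψ e) u := by
    rw [kempeSwap_eq_update hχ huv (hmiss u (Sym2.mem_mk_left _ _))
      (hmiss v (Sym2.mem_mk_right _ _))]
    funext f
    by_cases hf : f = e
    · rw [hf, Function.update_self]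
    · rw [Function.update_of_ne hf, hagree f hf]
  exact hψχ ▸ hφχ.tail kempeChange_kempeSwap

end Lifting

section Subquartic

variable [Fintype V] {G H : SimpleGraph V} [DecidableRel G.Adj] [DecidableRel H.Adj] {u v z : V}

def IsSpecialVertex (G : SimpleGraph V) [DecidableRel G.Adj] (z : V) : Prop :=
  G.degree z ≤ 2 ∨
    (G.degree z = 3 ∧ ((G.neighborFinset z).filter (fun y => G.degree y = 4)).card ≤ 2)

theorem degree_deleteEdges_add_one [DecidableEq V] (huv : G.Adj u v) :
    (G.deleteEdges {s(u, v)}).degree u + 1 = G.degree u := by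
  have hnbr : (G.deleteEdges {s(u, v)}).neighborFinset u = (G.neighborFinset u).erase v := by
    ext y
    simp [huv.ne, and_comm]
  rw [← card_neighborFinset_eq_degree, ← card_neighborFinset_eq_degree, hnbr,
    Finset.card_erase_add_one ((mem_neighborFinset _ _ _).2 huv)]

theorem IsSpecialVertex.degree_le_three (hz : IsSpecialVertex G z) : G.degree z ≤ 3 := by
  rcases hz with hz | ⟨hz, -⟩ <;> omega

theorem IsSpecialVertex.exists_adj_degree_add_le (hΔ : ∀ y, G.degree y ≤ 4)
    (hz : IsSpecialVertex G z) (hsupp : z ∈ G.support) :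
    ∃ u, G.Adj u z ∧ G.degree u + G.degree z ≤ 6 := by
  rcases hz with hz | ⟨hz, hfour⟩
  · obtain ⟨u, hzu⟩ := hsupp
    exact ⟨u, hzu.symm, by linarith [hΔ u]⟩
  · by_contra! h
    have hall : (G.neighborFinset z).filter (fun y => G.degree y = 4) = G.neighborFinset z :=
      Finset.filter_eq_self.2 fun y hy =>
        le_antisymm (hΔ y) (by linarith [h y ((mem_neighborFinset _ _ _).1 hy).symm])
    rw [hall, card_neighborFinset_eq_degree] at hfour
    omega

theorem IsSpecialVertex.anti (hHG : H ≤ G) (hΔ : ∀ y, G.degree y ≤ 4)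
    (hz : IsSpecialVertex G z) :
    IsSpecialVertex H z := by
  have hle : ∀ y, H.degree y ≤ G.degree y := fun y => degree_le_of_le hHG
  rcases hz with hz | ⟨hz, hfour⟩
  · exact Or.inl ((hle z).trans hz)
  by_cases hz' : H.degree z ≤ 2
  · exact Or.inl hz'
  refine Or.inr ⟨by linarith [hle z], (Finset.card_le_card fun y hy => ?_).trans hfour⟩
  rw [Finset.mem_filter, mem_neighborFinset] at hy ⊢
  exact ⟨hHG hy.1, le_antisymm (hΔ y) (hy.2 ▸ hle y)⟩

theorem isSpecialVertex_deleteEdges_left [DecidableEq V] (huv : G.Adj u v)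
    (hΔ : ∀ y, G.degree y ≤ 4)
    (h44 : ∀ y y', G.Adj y y' → ¬(G.degree y = 4 ∧ G.degree y' = 4)) :
    IsSpecialVertex (G.deleteEdges {s(u, v)}) u := by
  have hu := degree_deleteEdges_add_one huv
  by_cases hu' : (G.deleteEdges {s(u, v)}).degree u ≤ 2
  · exact Or.inl hu'
  -- now `deg u = 4` in `G`, so all neighbours of `u` have degree at most 3
  have hu4 : G.degree u = 4 := by linarith [hΔ u]
  refine Or.inr ⟨by omega, (Finset.card_eq_zero.2 (Finset.filter_eq_empty_iff.2
    fun y hy hy4 => ?_)).trans_le (Nat.zero_le 2)⟩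
  have hy : G.Adj u y := deleteEdges_le _ ((mem_neighborFinset _ _ _).1 hy)
  exact h44 u y hy ⟨hu4, le_antisymm (hΔ y) (hy4 ▸ degree_le_of_le (deleteEdges_le _))⟩

theorem isSpecialVertex_deleteEdges_right [DecidableEq V] (huv : G.Adj u v)
    (hv : G.degree v ≤ 3) :
    IsSpecialVertex (G.deleteEdges {s(u, v)}) v := by
  have := degree_deleteEdges_add_one huv.symm
  rw [Sym2.eq_swap] at this
  exact Or.inl (by omega)

end Subquartic

theorem kempeEquiv_five_of_forall_reachable_isSpecialVertex [Fintype V] [DecidableEq V]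
    (G : SimpleGraph V) [DecidableRel G.Adj] (hΔ : ∀ y, G.degree y ≤ 4)
    (h44 : ∀ y y', G.Adj y y' → ¬(G.degree y = 4 ∧ G.degree y' = 4))
    (hspec : ∀ x, ∃ z, G.Reachable x z ∧ IsSpecialVertex G z) {φ ψ : G.edgeSet → Fin 5}
    (hφ : IsProperEdgeColoring G 5 φ) (hψ : IsProperEdgeColoring G 5 ψ) :
    KempeEquiv G 5 φ ψ := by
  revert ‹DecidableRel G.Adj›
  induction G using WellFoundedLT.induction with | _ G ih => ?_
  intro _ hΔ h44 hspec
  rcases isEmpty_or_nonempty G.edgeSet with hempty | ⟨⟨e, he⟩⟩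
  · exact Subsingleton.elim φ ψ ▸ .refl
  induction e using Sym2.ind with | _ x y => ?_
  obtain ⟨z, hxz, hz⟩ := hspec x
  have hsupp : z ∈ G.support :=
    if h : z = x then h ▸ (mem_support G).2 ⟨y, he⟩ else mem_support_of_reachable h hxz.symm
  obtain ⟨u, huz, hdeg⟩ := hz.exists_adj_degree_add_le hΔ hsupp
  have hle := deleteEdges_le (G := G) {s(u, z)}
  refine KempeEquiv.of_restrictColoring_deleteEdges huz hdeg hφ hψ
    (ih _ (deleteEdges_lt huz) (hφ.restrictColoring hle) (hψ.restrictColoring hle)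
      (fun y => (degree_le_of_le hle).trans (hΔ y)) ?_ ?_)
  · exact fun y y' hyy' ⟨hy, hy'⟩ => h44 y y' (hle hyy')
      ⟨le_antisymm (hΔ y) (hy ▸ degree_le_of_le hle),
        le_antisymm (hΔ y') (hy' ▸ degree_le_of_le hle)⟩
  · intro x'
    obtain ⟨z', hxz', hz'⟩ := hspec x'
    rcases hxz'.of_le_sup_edge (deleteEdges_sup_edge huz).ge with h | ⟨h, -⟩ | ⟨h, -⟩
    exacts [⟨z', h, hz'.anti hle hΔ⟩, ⟨u, h, isSpecialVertex_deleteEdges_left huz hΔ h44⟩,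
      ⟨z, h, isSpecialVertex_deleteEdges_right huz hz.degree_le_three⟩]

end

/-- **Lemma (non-regular subquartic).** Let `G` be a connected simple graph with maximum
degree at most 4 in which no two vertices of degree four are adjacent. If `G` has a
vertex `v` with either (a) `deg(v) ≤ 2`, or (b) `deg(v) = 3` and `v` has at most two
neighbours of degree four, then all proper 5-edge-colourings of `G` are Kempe
equivalent, i.e. `κ_E(G, 5) = 1`. -/
theorem kempe_equiv_five_of_subquartic_nonregular {V : Type*} [Fintype V]
    [DecidableEq V] (G : SimpleGraph V) [DecidableRel G.Adj] (hconn : G.Connected)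
    (hΔ : ∀ u : V, G.degree u ≤ 4)
    (h44 : ∀ u w : V, G.Adj u w → ¬(G.degree u = 4 ∧ G.degree w = 4))
    (v : V)
    (hv : G.degree v ≤ 2 ∨
      (G.degree v = 3 ∧
        ((G.neighborFinset v).filter (fun u => G.degree u = 4)).card ≤ 2))
    (φ ψ : G.edgeSet → Fin 5)
    (hφ : IsProperEdgeColoring G 5 φ) (hψ : IsProperEdgeColoring G 5 ψ) :
    KempeEquiv G 5 φ ψ :=
  kempeEquiv_five_of_forall_reachable_isSpecialVertex G hΔ h44
    (fun x => ⟨v, hconn.preconnected x v, hv⟩) hφ hψ
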